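/- arXiv:1807.09933 — 2 statements merged into one kernel-verified Lean document; each statement's English description precedes it below -/
import Mathlib

section
/- In QI(ℝ), the subgroups Q₊ and Q₋ intersect trivially, and Q⁺ is the internal direct product Q₊ × Q₋. -/
/-- `f` is a `K`-quasi-isometric embedding. -/
def QIEmb {X Y : Type*} [PseudoMetricSpace X] [PseudoMetricSpace Y] (K : ℝ) (f : X → Y) : Prop :=
  1 < K ∧ ∀ x₁ x₂ : X, dist x₁ x₂ / K - K ≤ dist (f x₁) (f x₂) ∧
    dist (f x₁) (f x₂) ≤ K * dist x₁ x₂ + K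

/-- `f` is a `K`-quasi-isometry: a `K`-quasi-isometric embedding with `K`-dense image. -/
def QIsom {X Y : Type*} [PseudoMetricSpace X] [PseudoMetricSpace Y] (K : ℝ) (f : X → Y) : Prop :=
  QIEmb K f ∧ ∀ y : Y, ∃ x : X, dist (f x) y < K

/-- `f` is a quasi-isometry for some constant `K > 1`. -/
def IsQI {X Y : Type*} [PseudoMetricSpace X] [PseudoMetricSpace Y] (f : X → Y) : Prop :=
  ∃ K : ℝ, QIsom K f

/-- Two maps are equivalent (close) if they are within bounded sup-distance. -/
def Close {X Y : Type*} [PseudoMetricSpace X] [PseudoMetricSpace Y] (f g : X → Y) : Prop :=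
  ∃ M : ℝ, ∀ x : X, dist (f x) (g x) ≤ M

/-- `f` is piecewise linear: near every point it is affine on both sides
(so the break points form a discrete set). -/
def IsPL (f : ℝ → ℝ) : Prop :=
  ∀ x : ℝ, ∃ ε > (0:ℝ), ∃ a b c d : ℝ,
    (∀ t ∈ Set.Icc (x - ε) x, f t = a * t + b) ∧
    (∀ t ∈ Set.Icc x (x + ε), f t = c * t + d)

/-- The set of slopes `Λ(f)` of a piecewise linear map. -/
def slopes (f : ℝ → ℝ) : Set ℝ :=
  {a : ℝ | ∃ b x y : ℝ, x < y ∧ ∀ t ∈ Set.Icc x y, f t = a * t + b}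

/-- `f ∈ PL_δ(ℝ)`: a piecewise linear homeomorphism of `ℝ` whose slope set is bounded
away from `0` and `∞`. -/
def IsPLd (f : ℝ → ℝ) : Prop :=
  IsPL f ∧ Function.Bijective f ∧
    ∃ M : ℝ, 1 < M ∧ ∀ a ∈ slopes f, M⁻¹ < |a| ∧ |a| < M

/-- `f` is the identity near `-∞`. -/
def IdNearNegInf (f : ℝ → ℝ) : Prop := ∃ N : ℝ, ∀ t ≤ N, f t = t

/-- `f` is the identity near `+∞`. -/
def IdNearPosInf (f : ℝ → ℝ) : Prop := ∃ N : ℝ, ∀ t ≥ N, f t = t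

/-! Everything is decided near `±∞`: continuous maps `ℝ → ℝ` whose distance is bounded near
`-∞` and near `+∞` are close, the distance being bounded on compacta anyway. For the
decomposition, `fp` follows `id` near `-∞` and `f` on `[0, ∞)`, the two joined by a segment, and
`fm` symmetrically follows `f` then `id`; both `fp ∘ fm` and `fm ∘ fp` agree with `f` near both
ends. For uniqueness, near `+∞` the factors `fm`, `fm'` are the identity, so the compositions
`fp ∘ fm`, `fp' ∘ fm'` are `fp`, `fp'` there; near `-∞` the maps `fm`, `fm'` tend to `-∞`, where
`fp`, `fp'` are the identity, so the compositions are `fm`, `fm'` there. -/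

open Set Filter Topology Function

section Close

variable {X Y : Type*} [PseudoMetricSpace X] [PseudoMetricSpace Y] {f g h : X → Y}

theorem Close.refl (f : X → Y) : Close f f := ⟨0, fun x => (dist_self (f x)).le⟩

theorem Close.symm (hfg : Close f g) : Close g f :=
  let ⟨M, hM⟩ := hfg
  ⟨M, fun x => dist_comm (g x) (f x) ▸ hM x⟩

theorem Close.trans (hfg : Close f g) (hgh : Close g h) : Close f h :=
  let ⟨M, hM⟩ := hfg
  let ⟨M', hM'⟩ := hgh
  ⟨M + M', fun x => (dist_triangle _ (g x) _).trans (add_le_add (hM x) (hM' x))⟩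

theorem Close.isBoundedUnder_of_eventuallyEq {f' g' : X → Y} {l : Filter X} (h : Close f' g')
    (hf : f =ᶠ[l] f') (hg : g =ᶠ[l] g') :
    IsBoundedUnder (· ≤ ·) l fun x => dist (f x) (g x) :=
  let ⟨M, hM⟩ := h
  isBoundedUnder_of_eventually_le (a := M) <| by
    filter_upwards [hf, hg] with x hfx hgx
    rw [hfx, hgx]
    exact hM x

theorem close_of_isBoundedUnder_cocompact (hf : Continuous f) (hg : Continuous g)
    (h : IsBoundedUnder (· ≤ ·) (cocompact X) fun x => dist (f x) (g x)) : Close f g := by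
  obtain ⟨M, hM⟩ := h
  obtain ⟨K, hK, hKM⟩ := mem_cocompact.1 hM
  obtain ⟨C, hC⟩ := hK.bddAbove_image (hf.dist hg).continuousOn
  refine ⟨max C M, fun x => ?_⟩
  by_cases hx : x ∈ K
  · exact (hC (mem_image_of_mem _ hx)).trans (le_max_left _ _)
  · exact (hKM hx).trans (le_max_right _ _)

end Close

section Real

variable {Y : Type*} [PseudoMetricSpace Y] {f g : ℝ → Y}

theorem close_of_isBoundedUnder_atBot_atTop (hf : Continuous f) (hg : Continuous g)
    (hbot : IsBoundedUnder (· ≤ ·) atBot fun x => dist (f x) (g x))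
    (htop : IsBoundedUnder (· ≤ ·) atTop fun x => dist (f x) (g x)) : Close f g := by
  refine close_of_isBoundedUnder_cocompact hf hg ?_
  rw [cocompact_eq_atBot_atTop, IsBoundedUnder, map_sup]
  exact isBounded_sup hbot htop

theorem close_of_eventuallyEq_atBot_atTop (hf : Continuous f) (hg : Continuous g)
    (hbot : f =ᶠ[atBot] g) (htop : f =ᶠ[atTop] g) : Close f g :=
  close_of_isBoundedUnder_atBot_atTop hf hg
    ((Close.refl g).isBoundedUnder_of_eventuallyEq hbot .rfl)
    ((Close.refl g).isBoundedUnder_of_eventuallyEq htop .rfl)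

end Real

theorem isPL_iff_eventually {f : ℝ → ℝ} : IsPL f ↔ ∀ x,
    (∃ a b : ℝ, ∀ᶠ t in 𝓝[≤] x, f t = a * t + b) ∧ ∃ c d : ℝ, ∀ᶠ t in 𝓝[≥] x, f t = c * t + d := by
  refine forall_congr' fun x =>
    ⟨fun ⟨ε, hε, a, b, c, d, hl, hr⟩ => ?_, fun ⟨⟨a, b, hl⟩, c, d, hr⟩ => ?_⟩
  · exact ⟨⟨a, b, mem_of_superset (Icc_mem_nhdsLE (by linarith)) hl⟩,
      c, d, mem_of_superset (Icc_mem_nhdsGE (by linarith)) hr⟩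
  · obtain ⟨l, hlx, hl⟩ := mem_nhdsLE_iff_exists_Icc_subset.1 hl
    obtain ⟨u, hxu, hr⟩ := mem_nhdsGE_iff_exists_Icc_subset.1 hr
    refine ⟨min (x - l) (u - x), lt_min (by linarith) (by linarith), a, b, c, d,
      fun t ht => hl ⟨?_, ht.2⟩, fun t ht => hr ⟨ht.1, ?_⟩⟩
    · linarith [ht.1, min_le_left (x - l) (u - x)]
    · linarith [ht.2, min_le_right (x - l) (u - x)]

theorem IsPL.of_locally {f : ℝ → ℝ}
    (h : ∀ x, (∃ g, IsPL g ∧ f =ᶠ[𝓝[≤] x] g) ∧ ∃ g, IsPL g ∧ f =ᶠ[𝓝[≥] x] g) : IsPL f := by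
  refine isPL_iff_eventually.2 fun x => ⟨?_, ?_⟩
  · obtain ⟨g, hg, hfg⟩ := (h x).1
    obtain ⟨a, b, hab⟩ := (isPL_iff_eventually.1 hg x).1
    exact ⟨a, b, hfg.trans hab⟩
  · obtain ⟨g, hg, hfg⟩ := (h x).2
    obtain ⟨c, d, hcd⟩ := (isPL_iff_eventually.1 hg x).2
    exact ⟨c, d, hfg.trans hcd⟩

theorem isPL_affine (a b : ℝ) : IsPL fun t => a * t + b :=
  isPL_iff_eventually.2 fun _ => ⟨⟨a, b, .of_forall fun _ => rfl⟩, a, b, .of_forall fun _ => rfl⟩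

theorem id_eq_affine : (id : ℝ → ℝ) = fun t => 1 * t + 0 := by
  funext t
  simp

theorem isPL_id : IsPL id :=
  id_eq_affine ▸ isPL_affine 1 0

theorem IsPL.continuous {f : ℝ → ℝ} (hf : IsPL f) : Continuous f := by
  refine continuous_iff_continuousAt.2 fun x => continuousAt_iff_continuous_left_right.2 ⟨?_, ?_⟩
  · obtain ⟨a, b, hab⟩ := (isPL_iff_eventually.1 hf x).1
    exact (continuous_const_mul a |>.add continuous_const).continuousWithinAt.congr_of_eventuallyEq
      hab (hab.self_of_nhdsWithin self_mem_Iic)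
  · obtain ⟨c, d, hcd⟩ := (isPL_iff_eventually.1 hf x).2
    exact (continuous_const_mul c |>.add continuous_const).continuousWithinAt.congr_of_eventuallyEq
      hcd (hcd.self_of_nhdsWithin self_mem_Ici)

theorem slopes_affine_subset (a b : ℝ) : slopes (fun t => a * t + b) ⊆ {a} := by
  rintro s ⟨b', x, y, hxy, h⟩
  have hx := h x ⟨le_rfl, hxy.le⟩
  have hy := h y ⟨hxy.le, le_rfl⟩
  have : (s - a) * (y - x) = 0 := by linear_combination hx - hy
  exact (mul_eq_zero.1 this).resolve_right (sub_ne_zero.2 hxy.ne') |> sub_eq_zero.1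

theorem slopes_id_subset : slopes id ⊆ {1} :=
  id_eq_affine ▸ slopes_affine_subset 1 0

/-- `IsPLd f` unfolds to `IsPL f ∧ Bijective f ∧ BddAwayFromZeroInf (slopes f)`. -/
def BddAwayFromZeroInf (S : Set ℝ) : Prop :=
  ∃ M : ℝ, 1 < M ∧ ∀ a ∈ S, M⁻¹ < |a| ∧ |a| < M

theorem BddAwayFromZeroInf.mono {S T : Set ℝ} (hT : BddAwayFromZeroInf T) (hST : S ⊆ T) :
    BddAwayFromZeroInf S :=
  let ⟨M, hM, h⟩ := hT
  ⟨M, hM, fun a ha => h a (hST ha)⟩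

theorem BddAwayFromZeroInf.union {S T : Set ℝ} (hS : BddAwayFromZeroInf S)
    (hT : BddAwayFromZeroInf T) : BddAwayFromZeroInf (S ∪ T) := by
  obtain ⟨M, hM, hS⟩ := hS
  obtain ⟨N, hN, hT⟩ := hT
  have bound {K : ℝ} (hK : 1 < K) (hKM : K ≤ max M N) {a : ℝ} (ha : K⁻¹ < |a| ∧ |a| < K) :
      (max M N)⁻¹ < |a| ∧ |a| < max M N :=
    ⟨(inv_anti₀ (by linarith) hKM).trans_lt ha.1, ha.2.trans_le hKM⟩
  refine ⟨max M N, hM.trans_le (le_max_left M N), fun a ha => ha.elim ?_ ?_⟩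
  · exact fun ha => bound hM (le_max_left M N) (hS a ha)
  · exact fun ha => bound hN (le_max_right M N) (hT a ha)

theorem bddAwayFromZeroInf_singleton {a : ℝ} (ha : a ≠ 0) : BddAwayFromZeroInf {a} := by
  have ha' : 0 < |a| := abs_pos.2 ha
  refine ⟨|a| + |a|⁻¹ + 1, by linarith [inv_pos.2 ha'], fun b hb => ?_⟩
  rw [mem_singleton_iff.1 hb]
  refine ⟨inv_lt_of_inv_lt₀ ha' (by linarith [inv_pos.2 ha']), by linarith [inv_pos.2 ha']⟩

section Splice

variable {g h : ℝ → ℝ} {p : ℝ}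

theorem piecewise_Iic_eqOn_Ici (hp : g p = h p) : EqOn ((Iic p).piecewise g h) h (Ici p) := by
  intro t ht
  rcases (mem_Ici.1 ht).eq_or_lt with rfl | hpt
  · simp [hp]
  · exact piecewise_eqOn_compl (Iic p) g h (not_le.2 hpt)

theorem piecewise_Iic_eventuallyEq_atBot : (Iic p).piecewise g h =ᶠ[atBot] g :=
  (piecewise_eqOn (Iic p) g h).eventuallyEq_of_mem (Iic_mem_atBot p)

theorem piecewise_Iic_eventuallyEq_atTop : (Iic p).piecewise g h =ᶠ[atTop] h :=
  (piecewise_eqOn_compl (Iic p) g h).eventuallyEq_of_mem <| by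
    simpa only [compl_Iic] using Ioi_mem_atTop p

theorem isPL_piecewise_Iic (hg : IsPL g) (hh : IsPL h) (hp : g p = h p) :
    IsPL ((Iic p).piecewise g h) := by
  have eq_g {l : Filter ℝ} (hl : Iic p ∈ l) : (Iic p).piecewise g h =ᶠ[l] g :=
    (piecewise_eqOn (Iic p) g h).eventuallyEq_of_mem hl
  have eq_h {l : Filter ℝ} (hl : Ici p ∈ l) : (Iic p).piecewise g h =ᶠ[l] h :=
    (piecewise_Iic_eqOn_Ici hp).eventuallyEq_of_mem hl
  refine IsPL.of_locally fun x => ⟨?_, ?_⟩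
  · rcases le_or_gt x p with hxp | hpx
    · exact ⟨g, hg, eq_g (mem_of_superset self_mem_nhdsWithin (Iic_subset_Iic.2 hxp))⟩
    · exact ⟨h, hh, eq_h <| nhdsWithin_le_nhds <|
        mem_of_superset (Ioi_mem_nhds hpx) Ioi_subset_Ici_self⟩
  · rcases lt_or_ge x p with hxp | hpx
    · exact ⟨g, hg, eq_g <| nhdsWithin_le_nhds <|
        mem_of_superset (Iio_mem_nhds hxp) Iio_subset_Iic_self⟩
    · exact ⟨h, hh, eq_h (mem_of_superset self_mem_nhdsWithin (Ici_subset_Ici.2 hpx))⟩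

theorem strictMono_piecewise_Iic (hg : StrictMono g) (hh : StrictMono h) (hp : g p = h p) :
    StrictMono ((Iic p).piecewise g h) :=
  StrictMonoOn.Iic_union_Ici (hg.strictMonoOn _ |>.congr (piecewise_eqOn (Iic p) g h).symm)
    (hh.strictMonoOn _ |>.congr (piecewise_Iic_eqOn_Ici hp).symm)

theorem slopes_piecewise_Iic_subset (hp : g p = h p) :
    slopes ((Iic p).piecewise g h) ⊆ slopes g ∪ slopes h := by
  rintro a ⟨b, x, y, hxy, hab⟩
  rcases lt_or_ge x p with hxp | hpx
  · refine Or.inl ⟨b, x, min y p, lt_min hxy hxp, fun t ht => ?_⟩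
    rw [← piecewise_eqOn (Iic p) g h (ht.2.trans (min_le_right y p))]
    exact hab t ⟨ht.1, ht.2.trans (min_le_left y p)⟩
  · refine Or.inr ⟨b, x, y, hxy, fun t ht => ?_⟩
    rw [← piecewise_Iic_eqOn_Ici hp (hpx.trans ht.1)]
    exact hab t ht

end Splice

section Glue

variable {g h : ℝ → ℝ} {p q : ℝ}

noncomputable def joiningLine (g h : ℝ → ℝ) (p q : ℝ) (t : ℝ) : ℝ :=
  (h q - g p) / (q - p) * t + (h q - (h q - g p) / (q - p) * q)

theorem joiningLine_left (hpq : p ≠ q) : joiningLine g h p q p = g p := by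
  have : q - p ≠ 0 := sub_ne_zero.2 hpq.symm
  unfold joiningLine
  field_simp
  ring

theorem joiningLine_right : joiningLine g h p q q = h q := by
  simp [joiningLine]

noncomputable def glue (g h : ℝ → ℝ) (p q : ℝ) : ℝ → ℝ :=
  (Iic p).piecewise g ((Iic q).piecewise (joiningLine g h p q) h)

theorem glue_junction (hpq : p < q) : g p = (Iic q).piecewise (joiningLine g h p q) h p := by
  rw [piecewise_eqOn (Iic q) _ _ (mem_Iic.2 hpq.le), joiningLine_left hpq.ne]

theorem glue_eventuallyEq_atBot : glue g h p q =ᶠ[atBot] g :=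
  piecewise_Iic_eventuallyEq_atBot

theorem glue_eventuallyEq_atTop : glue g h p q =ᶠ[atTop] h :=
  piecewise_Iic_eventuallyEq_atTop.trans piecewise_Iic_eventuallyEq_atTop

theorem isPL_glue (hpq : p < q) (hg : IsPL g) (hh : IsPL h) : IsPL (glue g h p q) :=
  isPL_piecewise_Iic hg (isPL_piecewise_Iic (isPL_affine _ _) hh joiningLine_right)
    (glue_junction hpq)

theorem strictMono_glue (hpq : p < q) (hgh : g p < h q) (hg : StrictMono g) (hh : StrictMono h) :
    StrictMono (glue g h p q) := by
  have hline : StrictMono (joiningLine g h p q) :=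
    fun _ _ hst => add_lt_add_left (mul_lt_mul_of_pos_left hst (div_pos (by linarith)
      (by linarith))) _
  exact strictMono_piecewise_Iic hg (strictMono_piecewise_Iic hline hh joiningLine_right)
    (glue_junction hpq)

theorem slopes_glue_subset (hpq : p < q) :
    slopes (glue g h p q) ⊆ slopes g ∪ ({(h q - g p) / (q - p)} ∪ slopes h) :=
  (slopes_piecewise_Iic_subset (glue_junction hpq)).trans <| union_subset_union_right _ <|
    (slopes_piecewise_Iic_subset joiningLine_right).trans <|
      union_subset_union_left _ (slopes_affine_subset _ _)

end Glue

theorem idNearNegInf_iff {f : ℝ → ℝ} : IdNearNegInf f ↔ f =ᶠ[atBot] id :=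
  eventually_atBot.symm

theorem idNearPosInf_iff {f : ℝ → ℝ} : IdNearPosInf f ↔ f =ᶠ[atTop] id :=
  eventually_atTop.symm

theorem Filter.EventuallyEq.comp_of_eventuallyEq_id {α : Type*} {l : Filter α} {u v f : α → α}
    (hu : u =ᶠ[l] id) (hv : v =ᶠ[l] f) (hf : Tendsto f l l) : u ∘ v =ᶠ[l] f :=
  (hu.comp_tendsto (hf.congr' hv.symm)).trans hv

namespace IsPLd

variable {f : ℝ → ℝ}

theorem continuous (hf : IsPLd f) : Continuous f :=
  hf.1.continuous

theorem tendsto_atBot (hf : IsPLd f) (hm : StrictMono f) : Tendsto f atBot atBot :=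
  tendsto_atBot_atBot_of_monotone hm.monotone fun b => (hf.2.1.2 b).imp fun _ ha => ha.le

theorem tendsto_atTop (hf : IsPLd f) (hm : StrictMono f) : Tendsto f atTop atTop :=
  tendsto_atTop_atTop_of_monotone hm.monotone fun b => (hf.2.1.2 b).imp fun _ ha => ha.ge

theorem strictMono_of_eventuallyEq_id_atTop (hf : IsPLd f) (hid : f =ᶠ[atTop] id) :
    StrictMono f := by
  refine (hf.continuous.strictMono_of_inj hf.2.1.1).resolve_right fun hanti => ?_
  obtain ⟨N, hN⟩ := eventually_atTop.1 hid
  have := hanti (lt_add_one N)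
  rw [hN N le_rfl, hN (N + 1) (by linarith)] at this
  exact (lt_add_one N).not_gt this

end IsPLd

theorem isPLd_id : IsPLd id :=
  ⟨isPL_id, bijective_id, (bddAwayFromZeroInf_singleton one_ne_zero).mono slopes_id_subset⟩

theorem exists_isPLd_eventuallyEq_atBot_atTop {g h : ℝ → ℝ} (hg : IsPLd g) (hgm : StrictMono g)
    (hh : IsPLd h) (hhm : StrictMono h) :
    ∃ F, IsPLd F ∧ F =ᶠ[atBot] g ∧ F =ᶠ[atTop] h := by
  obtain ⟨p, hgp, hp⟩ :=
    ((hg.tendsto_atBot hgm).eventually (eventually_lt_atBot (h 0))).and (eventually_lt_atBot 0)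
      |>.exists
  have hF := isPL_glue hp hg.1 hh.1
  have hFm := strictMono_glue hp hgp hgm hhm
  have hslope : (h 0 - g p) / (0 - p) ≠ 0 := (div_pos (by linarith) (by linarith)).ne'
  refine ⟨glue g h p 0, ⟨hF, ⟨hFm.injective, hF.continuous.surjective ?_ ?_⟩, ?_⟩,
    glue_eventuallyEq_atBot, glue_eventuallyEq_atTop⟩
  · exact (hh.tendsto_atTop hhm).congr' glue_eventuallyEq_atTop.symm
  · exact (hg.tendsto_atBot hgm).congr' glue_eventuallyEq_atBot.symm
  · exact (BddAwayFromZeroInf.union hg.2.2 <|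
      (bddAwayFromZeroInf_singleton hslope).union hh.2.2).mono (slopes_glue_subset hp)

theorem exists_isPLd_comp_close {f : ℝ → ℝ} (hf : IsPLd f) (hf_mono : StrictMono f) :
    ∃ fp fm : ℝ → ℝ, IsPLd fp ∧ fp =ᶠ[atBot] id ∧ IsPLd fm ∧ fm =ᶠ[atTop] id ∧
      Close f (fp ∘ fm) ∧ Close f (fm ∘ fp) := by
  obtain ⟨fp, hfp, hfp_bot, hfp_top⟩ :=
    exists_isPLd_eventuallyEq_atBot_atTop isPLd_id strictMono_id hf hf_mono
  obtain ⟨fm, hfm, hfm_bot, hfm_top⟩ :=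
    exists_isPLd_eventuallyEq_atBot_atTop hf hf_mono isPLd_id strictMono_id
  refine ⟨fp, fm, hfp, hfp_bot, hfm, hfm_top, ?_, ?_⟩
  · exact close_of_eventuallyEq_atBot_atTop hf.continuous (hfp.continuous.comp hfm.continuous)
      (hfp_bot.comp_of_eventuallyEq_id hfm_bot (hf.tendsto_atBot hf_mono)).symm
      ((hfm_top.fun_comp fp).trans hfp_top).symm
  · exact close_of_eventuallyEq_atBot_atTop hf.continuous (hfm.continuous.comp hfp.continuous)
      ((hfp_bot.fun_comp fm).trans hfm_bot).symm
      (hfm_top.comp_of_eventuallyEq_id hfp_top (hf.tendsto_atTop hf_mono)).symm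

theorem close_of_close_comp {fp fm fp' fm' : ℝ → ℝ}
    (hfp : IsPLd fp) (hfp_id : fp =ᶠ[atBot] id) (hfm : IsPLd fm) (hfm_id : fm =ᶠ[atTop] id)
    (hfp' : IsPLd fp') (hfp'_id : fp' =ᶠ[atBot] id) (hfm' : IsPLd fm') (hfm'_id : fm' =ᶠ[atTop] id)
    (h : Close (fp ∘ fm) (fp' ∘ fm')) : Close fp fp' ∧ Close fm fm' := by
  have hfm_bot := hfm.tendsto_atBot (hfm.strictMono_of_eventuallyEq_id_atTop hfm_id)
  have hfm'_bot := hfm'.tendsto_atBot (hfm'.strictMono_of_eventuallyEq_id_atTop hfm'_id)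
  constructor
  · exact close_of_isBoundedUnder_atBot_atTop hfp.continuous hfp'.continuous
      ((Close.refl id).isBoundedUnder_of_eventuallyEq hfp_id hfp'_id)
      (h.isBoundedUnder_of_eventuallyEq (hfm_id.fun_comp fp).symm (hfm'_id.fun_comp fp').symm)
  · exact close_of_isBoundedUnder_atBot_atTop hfm.continuous hfm'.continuous
      (h.isBoundedUnder_of_eventuallyEq (hfp_id.comp_of_eventuallyEq_id .rfl hfm_bot).symm
        (hfp'_id.comp_of_eventuallyEq_id .rfl hfm'_bot).symm)
      ((Close.refl id).isBoundedUnder_of_eventuallyEq hfm_id hfm'_id)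

/-- In `QI(ℝ)`: the subgroups `Q₊` and `Q₋` intersect trivially, and `Q⁺` is the internal
direct product `Q₊ × Q₋`: every orientation-preserving class decomposes as a commuting
product of a `Q₊`-class and a `Q₋`-class, uniquely up to equivalence. -/
theorem Qplus_Qminus_direct_product :
    (∀ f g : ℝ → ℝ, IsPLd f → IdNearNegInf f → IsPLd g → IdNearPosInf g →
      Close f g → Close f (id : ℝ → ℝ)) ∧
    (∀ f : ℝ → ℝ, IsPLd f → StrictMono f →
      ∃ fp fm : ℝ → ℝ, IsPLd fp ∧ IdNearNegInf fp ∧ IsPLd fm ∧ IdNearPosInf fm ∧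
        Close f (fp ∘ fm) ∧ Close (fp ∘ fm) (fm ∘ fp) ∧
        ∀ fp' fm' : ℝ → ℝ, IsPLd fp' → IdNearNegInf fp' → IsPLd fm' → IdNearPosInf fm' →
          Close f (fp' ∘ fm') → Close fp fp' ∧ Close fm fm') := by
  refine ⟨fun f g hf hf_id hg hg_id hfg => ?_, fun f hf hf_mono => ?_⟩
  · exact close_of_isBoundedUnder_atBot_atTop hf.continuous continuous_id
      ((Close.refl id).isBoundedUnder_of_eventuallyEq (idNearNegInf_iff.1 hf_id) .rfl)
      (hfg.isBoundedUnder_of_eventuallyEq .rfl (idNearPosInf_iff.1 hg_id).symm)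
  obtain ⟨fp, fm, hfp, hfp_id, hfm, hfm_id, hcomp, hcomp'⟩ := exists_isPLd_comp_close hf hf_mono
  refine ⟨fp, fm, hfp, idNearNegInf_iff.2 hfp_id, hfm, idNearPosInf_iff.2 hfm_id, hcomp,
    hcomp.symm.trans hcomp', fun fp' fm' hfp' hfp'_id hfm' hfm'_id h => ?_⟩
  exact close_of_close_comp hfp hfp_id hfm hfm_id hfp' (idNearNegInf_iff.1 hfp'_id) hfm'
    (idNearPosInf_iff.1 hfm'_id) (hcomp.symm.trans h)
end

section
/- No orientation-reversing quasi-isometry class is central in QI(ℝ): if f is a quasi-isometry of ℝ that swaps the two ends (f(t) → −∞ as t → +∞ and f(t) → +∞ as t → −∞), then [f] is not in the center of QI(ℝ). -/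
/-!
Let `h` be the PL homeomorphism of slope `1` on `(-∞, 0)` and slope `2` on `[0, ∞)`. If `f` sends
`+∞` to `-∞`, then for large `t > 0` we get `h (f t) = f t` but `f (h t) = f (2 t)`. Since `f` is a
quasi-isometric embedding, `dist (f t) (f (2 t))` grows linearly in `t`, so `f ∘ h` and `h ∘ f`
are not close.
-/

theorem QIEmb.dist_le_of_dist_le {X Y : Type*} [PseudoMetricSpace X] [PseudoMetricSpace Y]
    {K M : ℝ} {f : X → Y} (hf : QIEmb K f) {x y : X} (h : dist (f x) (f y) ≤ M) :
    dist x y ≤ K * (M + K) := by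
  have hK : 0 < K := one_pos.trans hf.1
  have hlow := (hf.2 x y).1
  rw [← div_le_iff₀' hK]
  linarith

theorem qIsom_of_surjective_of_bilipschitz {X Y : Type*} [PseudoMetricSpace X] [PseudoMetricSpace Y]
    {K : ℝ} {f : X → Y} (hK : 1 < K) (hf : Function.Surjective f)
    (hlow : ∀ x y, dist x y / K ≤ dist (f x) (f y))
    (hup : ∀ x y, dist (f x) (f y) ≤ K * dist x y) : QIsom K f := by
  refine ⟨⟨hK, fun x y => ⟨?_, ?_⟩⟩, fun y => ?_⟩
  · linarith [hlow x y]
  · linarith [hup x y]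
  · obtain ⟨x, rfl⟩ := hf y
    exact ⟨x, by simpa using one_pos.trans hK⟩

noncomputable def stretchPos (x : ℝ) : ℝ := if x < 0 then x else 2 * x

theorem stretchPos_of_neg {x : ℝ} (hx : x < 0) : stretchPos x = x := if_pos hx

theorem stretchPos_of_nonneg {x : ℝ} (hx : 0 ≤ x) : stretchPos x = 2 * x := if_neg hx.not_gt

theorem stretchPos_surjective : Function.Surjective stretchPos := by
  intro y
  rcases lt_or_ge y 0 with hy | hy
  · exact ⟨y, stretchPos_of_neg hy⟩
  · exact ⟨y / 2, by rw [stretchPos_of_nonneg (by linarith)]; ring⟩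

theorem dist_le_dist_stretchPos (x y : ℝ) :
    dist x y ≤ dist (stretchPos x) (stretchPos y) ∧
      dist (stretchPos x) (stretchPos y) ≤ 2 * dist x y := by
  simp only [stretchPos, Real.dist_eq]
  split_ifs with hx hy hy
  · exact ⟨le_rfl, by linarith [abs_nonneg (x - y)]⟩
  · rw [abs_of_neg (by linarith : x - y < 0), abs_of_neg (by linarith : x - 2 * y < 0)]
    constructor <;> linarith
  · rw [abs_of_pos (by linarith : 0 < x - y), abs_of_pos (by linarith : 0 < 2 * x - y)]
    constructor <;> linarith
  · rw [← mul_sub, abs_mul, abs_two]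
    exact ⟨by linarith [abs_nonneg (x - y)], le_rfl⟩

theorem isQI_stretchPos : IsQI stretchPos :=
  ⟨2, qIsom_of_surjective_of_bilipschitz one_lt_two stretchPos_surjective
    (fun x y => (div_le_self dist_nonneg one_le_two).trans (dist_le_dist_stretchPos x y).1)
    (fun x y => (dist_le_dist_stretchPos x y).2)⟩

open Filter in
theorem orientation_reversing_not_central_general (f : ℝ → ℝ) (hf : IsQI f)
    (h₁ : Tendsto f atTop atBot) :
    ¬ ∀ g : ℝ → ℝ, IsQI g → Close (f ∘ g) (g ∘ f) := by
  intro hcentral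
  obtain ⟨K, hK, -⟩ := hf
  obtain ⟨M, hM⟩ := hcentral stretchPos isQI_stretchPos
  obtain ⟨t, hft, ht⟩ := ((h₁.eventually (eventually_lt_atBot 0)).and
    (eventually_gt_atTop (max 0 (K * (M + K))))).exists
  rw [max_lt_iff] at ht
  have hclose : dist (f t) (f (2 * t)) ≤ M := by
    simpa [stretchPos_of_neg hft, stretchPos_of_nonneg ht.1.le, dist_comm] using hM t
  have hdist : dist t (2 * t) = t := by
    rw [Real.dist_eq, abs_of_nonpos (by linarith)]
    ring
  linarith [hK.dist_le_of_dist_le hclose]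

open Filter in
/-- No orientation-reversing quasi-isometry class is central in `QI(ℝ)`: if `f` swaps the
two ends of `ℝ` then `[f]` fails to commute with some class. -/
theorem orientation_reversing_not_central (f : ℝ → ℝ) (hf : IsQI f)
    (h₁ : Tendsto f atTop atBot) (h₂ : Tendsto f atBot atTop) :
    ¬ ∀ g : ℝ → ℝ, IsQI g → Close (f ∘ g) (g ∘ f) :=
  orientation_reversing_not_central_general f hf h₁
end
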